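/- For a ≠ 0 and any b, κ ∈ ℝ, the identity (√π/2)·∫_κ^∞ exp(−t²)·erf(at+b) dt = −(π/4)·erf(aκ+b)·erf(κ) + sign(a)·( π/4 − I_{1/|a|, −b/a}(∞) + I_{1/|a|, −b/a}((aκ+b)·sign(a)) ) holds, where I_{a,b}(x) = (√π/2)∫₀ˣ exp(−t²)erf(at+b)dt and I_{a,b}(∞) is its limit as x → ∞. -/

import Mathlib

/-!
Integrate by parts with `(√π/2) · erf` as the antiderivative of `exp (-t²)`: the boundary term
tends to `(π/4) · sign a` because `erf (a x + b) → sign a`, and the remaining integral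
`∫ a · exp (-(a t + b)²) · erf t dt` becomes, after the substitution `s = (a t + b) · sign a`
(so that `t = s / |a| - b / a`), `sign a` times an increment of `I_{1/|a|, -b/a}`.
Passing to the limit `x → ∞` on `[κ, x]` gives the identity.
-/

open MeasureTheory Real Filter

/-- The error function. -/
noncomputable def erf (x : ℝ) : ℝ :=
  (2 / Real.sqrt Real.pi) * ∫ t in (0:ℝ)..x, Real.exp (-t^2)

/-- The function I_{a,b}(x) = (√π/2)·∫₀ˣ exp(−t²)·erf(at + b) dt. -/
noncomputable def Iab (a b x : ℝ) : ℝ :=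
  (Real.sqrt Real.pi / 2) * ∫ t in (0:ℝ)..x, Real.exp (-t^2) * erf (a * t + b)

lemma integrable_exp_neg_sq : Integrable fun t : ℝ => exp (-t ^ 2) := by
  simpa using integrable_exp_neg_mul_sq one_pos

lemma hasDerivAt_erf (x : ℝ) : HasDerivAt erf (2 / √π * exp (-x ^ 2)) x :=
  have hc : Continuous fun t : ℝ => exp (-t ^ 2) := by fun_prop
  (intervalIntegral.integral_hasDerivAt_right (hc.intervalIntegrable _ _)
    (hc.stronglyMeasurableAtFilter _ _) hc.continuousAt).const_mul _

lemma hasDerivAt_sqrt_pi_div_two_mul_erf (x : ℝ) :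
    HasDerivAt (fun y => √π / 2 * erf y) (exp (-x ^ 2)) x := by
  refine ((hasDerivAt_erf x).const_mul (√π / 2)).congr_deriv ?_
  rw [← mul_assoc, div_mul_div_comm, mul_comm √π 2, div_self (by positivity), one_mul]

@[fun_prop]
lemma continuous_erf : Continuous erf :=
  continuous_iff_continuousAt.2 fun x => (hasDerivAt_erf x).continuousAt

lemma strictMono_erf : StrictMono erf :=
  strictMono_of_hasDerivAt_pos hasDerivAt_erf fun x => by positivity

lemma erf_neg (x : ℝ) : erf (-x) = -erf x := by
  have h := intervalIntegral.integral_comp_neg (a := 0) (b := -x) fun t : ℝ => exp (-t ^ 2)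
  simp only [neg_sq, neg_neg, neg_zero] at h
  rw [erf, h, intervalIntegral.integral_symm, erf, mul_neg]

lemma tendsto_erf_atTop : Tendsto erf atTop (nhds 1) := by
  have h := (intervalIntegral_tendsto_integral_Ioi 0 integrable_exp_neg_sq.integrableOn
    tendsto_id).const_mul (2 / √π)
  have hI : ∫ t in Set.Ioi (0 : ℝ), exp (-t ^ 2) = √π / 2 := by
    simpa using integral_gaussian_Ioi 1
  have hone : 2 / √π * (√π / 2) = 1 := by field_simp
  rw [hI, hone] at h
  exact h

lemma tendsto_erf_atBot : Tendsto erf atBot (nhds (-1)) := by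
  simpa [Function.comp_def, erf_neg] using (tendsto_erf_atTop.comp tendsto_neg_atBot_atTop).neg

lemma abs_erf_le_one (x : ℝ) : |erf x| ≤ 1 :=
  abs_le.2 ⟨strictMono_erf.monotone.le_of_tendsto tendsto_erf_atBot x,
    strictMono_erf.monotone.ge_of_tendsto tendsto_erf_atTop x⟩

lemma tendsto_erf_affine_atTop {a : ℝ} (ha : a ≠ 0) (b : ℝ) :
    Tendsto (fun x => erf (a * x + b)) atTop (nhds (Real.sign a)) := by
  rcases ha.lt_or_gt with ha | ha
  · rw [Real.sign_of_neg ha]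
    exact tendsto_erf_atBot.comp
      (tendsto_atBot_add_const_right _ b (tendsto_id.const_mul_atTop_of_neg ha))
  · rw [Real.sign_of_pos ha]
    exact tendsto_erf_atTop.comp (tendsto_atTop_add_const_right _ b (tendsto_id.const_mul_atTop ha))

lemma integrable_exp_neg_sq_mul_erf_affine (a b : ℝ) :
    Integrable fun t => exp (-t ^ 2) * erf (a * t + b) :=
  integrable_exp_neg_sq.mul_bdd (by fun_prop : Continuous _).aestronglyMeasurable
    (ae_of_all _ fun t => (Real.norm_eq_abs _).trans_le (abs_erf_le_one _))

lemma Iab_sub_Iab (a b x y : ℝ) :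
    Iab a b y - Iab a b x = √π / 2 * ∫ t in x..y, exp (-t ^ 2) * erf (a * t + b) := by
  have hc : Continuous fun t => exp (-t ^ 2) * erf (a * t + b) := by fun_prop
  rw [Iab, Iab, ← mul_sub, intervalIntegral.integral_interval_sub_left
    (hc.intervalIntegrable _ _) (hc.intervalIntegrable _ _)]

lemma mul_sign_eq_abs (a : ℝ) : a * Real.sign a = |a| := by
  rcases lt_trichotomy a 0 with ha | rfl | ha
  · rw [Real.sign_of_neg ha, abs_of_neg ha, mul_neg_one]
  · simp
  · rw [Real.sign_of_pos ha, abs_of_pos ha, mul_one]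

lemma sign_mul_sign_of_ne_zero {a : ℝ} (ha : a ≠ 0) : Real.sign a * Real.sign a = 1 := by
  rcases Real.sign_apply_eq_of_ne_zero a ha with h | h <;> rw [h] <;> norm_num

lemma affine_mul_sign (a b t : ℝ) : (a * t + b) * Real.sign a = |a| * t + b * Real.sign a := by
  rw [← mul_sign_eq_abs]; ring

lemma tendsto_affine_mul_sign_atTop {a : ℝ} (ha : a ≠ 0) (b : ℝ) :
    Tendsto (fun x => (a * x + b) * Real.sign a) atTop atTop := by
  simp_rw [affine_mul_sign]
  exact tendsto_atTop_add_const_right _ _ (tendsto_id.const_mul_atTop (abs_pos.2 ha))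

lemma integral_mul_comp_affine_mul_sign {a : ℝ} (ha : a ≠ 0) (b κ x : ℝ) (f : ℝ → ℝ) :
    ∫ t in κ..x, a * f ((a * t + b) * Real.sign a) =
      Real.sign a * ∫ s in (a * κ + b) * Real.sign a..(a * x + b) * Real.sign a, f s := by
  have hslope : a * |a|⁻¹ = Real.sign a := by
    rw [← mul_sign_eq_abs, mul_inv, mul_inv_cancel_left₀ ha, Real.inv_sign]
  simp_rw [affine_mul_sign, intervalIntegral.integral_const_mul,
    intervalIntegral.integral_comp_mul_add _ (abs_ne_zero.2 ha), smul_eq_mul, ← mul_assoc, hslope]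

lemma integral_exp_neg_sq_mul_erf_affine_by_parts (a b κ x : ℝ) :
    √π / 2 * ∫ t in κ..x, exp (-t ^ 2) * erf (a * t + b) =
      π / 4 * (erf (a * x + b) * erf x - erf (a * κ + b) * erf κ)
        - √π / 2 * ∫ t in κ..x, a * (exp (-(a * t + b) ^ 2) * erf t) := by
  have hu (t : ℝ) :
      HasDerivAt (fun y => erf (a * y + b)) (2 / √π * exp (-(a * t + b) ^ 2) * a) t :=
    (hasDerivAt_erf _).comp t
      (((hasDerivAt_id t).const_mul a).add_const b |>.congr_deriv (mul_one a))
  have hibp := intervalIntegral.integral_mul_deriv_eq_deriv_mul (a := κ) (b := x)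
    (fun t _ => hu t)
    (fun t _ => hasDerivAt_sqrt_pi_div_two_mul_erf t)
    ((by fun_prop : Continuous _).intervalIntegrable _ _)
    ((by fun_prop : Continuous _).intervalIntegrable _ _)
  have hint : ∫ t in κ..x, 2 / √π * exp (-(a * t + b) ^ 2) * a * (√π / 2 * erf t) =
      ∫ t in κ..x, a * (exp (-(a * t + b) ^ 2) * erf t) :=
    intervalIntegral.integral_congr fun t _ => by field_simp
  have hπ : √π * √π = π := mul_self_sqrt pi_pos.le
  simp only [mul_comm (exp (-_ ^ 2)) (erf (a * _ + b)), hibp, hint]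
  linear_combination (erf (a * x + b) * erf x - erf (a * κ + b) * erf κ) / 4 * hπ

lemma integral_exp_neg_sq_mul_erf_affine_eq_Iab {a : ℝ} (ha : a ≠ 0) (b κ x : ℝ) :
    √π / 2 * ∫ t in κ..x, exp (-t ^ 2) * erf (a * t + b) =
      π / 4 * (erf (a * x + b) * erf x - erf (a * κ + b) * erf κ)
        - Real.sign a * (Iab (1 / |a|) (-b / a) ((a * x + b) * Real.sign a)
          - Iab (1 / |a|) (-b / a) ((a * κ + b) * Real.sign a)) := by
  have hinv (t : ℝ) : 1 / |a| * ((a * t + b) * Real.sign a) + -b / a = t := by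
    rw [affine_mul_sign]
    field_simp
    linear_combination b * mul_sign_eq_abs a
  have hsq (t : ℝ) : ((a * t + b) * Real.sign a) ^ 2 = (a * t + b) ^ 2 := by
    rw [mul_pow, sq (Real.sign a), sign_mul_sign_of_ne_zero ha, mul_one]
  have hsub := integral_mul_comp_affine_mul_sign ha b κ x
    fun s => exp (-s ^ 2) * erf (1 / |a| * s + -b / a)
  simp only [hinv, hsq] at hsub
  rw [integral_exp_neg_sq_mul_erf_affine_by_parts, hsub, Iab_sub_Iab]
  ring

theorem Iab_integration_by_parts (a b κ L : ℝ) (ha : a ≠ 0)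
    (hL : Tendsto (fun x => Iab (1/|a|) (-b/a) x) atTop (nhds L)) :
    (Real.sqrt Real.pi / 2) * ∫ t in Set.Ioi κ, Real.exp (-t^2) * erf (a * t + b) =
      -(Real.pi / 4) * erf (a * κ + b) * erf κ
        + Real.sign a *
          (Real.pi / 4 - L + Iab (1/|a|) (-b/a) ((a * κ + b) * Real.sign a)) := by
  have hlim := (intervalIntegral_tendsto_integral_Ioi κ
    (integrable_exp_neg_sq_mul_erf_affine a b).integrableOn tendsto_id).const_mul (√π / 2)
  have hibp : Tendsto (fun x => √π / 2 * ∫ t in κ..x, exp (-t ^ 2) * erf (a * t + b)) atTop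
      (nhds (π / 4 * (Real.sign a * 1 - erf (a * κ + b) * erf κ)
        - Real.sign a * (L - Iab (1 / |a|) (-b / a) ((a * κ + b) * Real.sign a)))) := by
    simp_rw [integral_exp_neg_sq_mul_erf_affine_eq_Iab ha]
    exact ((((tendsto_erf_affine_atTop ha b).mul tendsto_erf_atTop).sub_const _).const_mul _).sub
      (((hL.comp (tendsto_affine_mul_sign_atTop ha b)).sub_const _).const_mul _)
  rw [tendsto_nhds_unique hlim hibp]
  ring
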